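/- Exact value for k=2: M(n,2,p) = p/(M+2) + (δ² - δ(1+p) + p)/((M+1)(M+2)), where M = ⌊(n-1)(1-p)⌋ and δ = {(n-1)(1-p)} are the integer and fractional parts of (n-1)(1-p). -/

import Mathlib

open Finset
open scoped Classical

/-- `Q` is a `k`-wise independent distribution on bits indexed by `ι`,
with each bit equal to `true` with probability `p`. -/
def kwise {ι : Type} [Fintype ι] [DecidableEq ι] (k : ℕ) (p : ℝ)
    (Q : (ι → Bool) → ℝ) : Prop :=
  (∀ x, 0 ≤ Q x) ∧ (∑ x, Q x = 1) ∧
  ∀ S : Finset ι, S.card ≤ k → ∀ b : ι → Bool,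
    (∑ x ∈ univ.filter (fun x => ∀ i ∈ S, x i = b i), Q x)
      = ∏ i ∈ S, (if b i then p else 1 - p)

/-- Probability of the event `E` under the distribution `Q`. -/
noncomputable def pr {ι : Type} [Fintype ι] [DecidableEq ι]
    (Q : (ι → Bool) → ℝ) (E : (ι → Bool) → Prop) : ℝ :=
  ∑ x, if E x then Q x else 0

/-- Number of bits equal to `true`. -/
def cnt {ι : Type} [Fintype ι] [DecidableEq ι] (x : ι → Bool) : ℕ :=
  (univ.filter (fun i => x i = true)).card

/-!
Let `Z` be the number of zeros. For any pairwise independent distribution,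
`E[Z] = n(1-p)` and `E[Z(Z-1)] = n(n-1)(1-p)²`, which determines `E[(Z-M-1)(Z-M-2)]`.
This quadratic is nonnegative at every integer and equals `(M+1)(M+2)` at `Z = 0`, the
all-ones vector; that is the upper bound. Conversely, under a permutation-invariant
distribution a fixed set of `t` coordinates is all zero with probability
`E[C(Z,t)] / C(n,t)`, so any law of `Z` with the right first two binomial moments lifts to a
pairwise independent distribution. The law supported on `{0, M+1, M+2}` (whose weights are
nonnegative for `M = ⌊(n-1)(1-p)⌋`) attains the bound, as the quadratic vanishes at `M+1` and
`M+2`.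
-/

section

variable {ι : Type} [Fintype ι]

def numFalse (x : ι → Bool) : ℕ := #{i | x i = false}

lemma numFalse_comp_perm (x : ι → Bool) (σ : Equiv.Perm ι) : numFalse (x ∘ σ) = numFalse x :=
  card_equiv σ (by simp)

lemma numFalse_le (x : ι → Bool) : numFalse x ≤ Fintype.card ι := card_filter_le _ _

lemma exists_numFalse_eq {j : ℕ} (hj : j ≤ Fintype.card ι) : ∃ x : ι → Bool, numFalse x = j := by
  obtain ⟨T, -, hT⟩ := exists_subset_card_eq (s := (univ : Finset ι)) (by simpa using hj)
  exact ⟨fun i => decide (i ∉ T), by simpa [numFalse] using hT⟩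

lemma numFalse_eq_zero_iff {x : ι → Bool} : numFalse x = 0 ↔ x = fun _ => true := by
  simp [numFalse, funext_iff]

variable [DecidableEq ι]

lemma pr_eq_sum_filter (Q : (ι → Bool) → ℝ) (E : (ι → Bool) → Prop) [DecidablePred E] :
    pr Q E = ∑ x with E x, Q x := by
  rw [sum_filter, pr]
  congr!

lemma pr_eq_pr_and_add_pr_and_not (Q : (ι → Bool) → ℝ) (E F : (ι → Bool) → Prop) :
    pr Q E = pr Q (fun x => E x ∧ F x) + pr Q (fun x => E x ∧ ¬F x) := by
  simp only [pr, ← sum_add_distrib]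
  refine sum_congr rfl fun x _ => ?_
  by_cases hE : E x <;> by_cases hF : F x <;> simp [hE, hF]

lemma pr_forall_true (Q : (ι → Bool) → ℝ) :
    pr Q (fun x => ∀ i, x i = true) = Q (fun _ => true) := by
  have hevent : ({x | ∀ i, x i = true} : Finset (ι → Bool)) = {fun _ => true} := by
    ext x
    simp [funext_iff]
  rw [pr_eq_sum_filter, hevent, sum_singleton]

lemma pr_forall_true_and_forall_false {k : ℕ} {p : ℝ} {Q : (ι → Bool) → ℝ}
    (hfalse : ∀ T : Finset ι, #T ≤ k → pr Q (fun x => ∀ i ∈ T, x i = false) = (1 - p) ^ #T)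
    {U T : Finset ι} (hUT : Disjoint U T) (hk : #U + #T ≤ k) :
    pr Q (fun x => (∀ i ∈ U, x i = true) ∧ ∀ i ∈ T, x i = false) = p ^ #U * (1 - p) ^ #T := by
  induction U using Finset.induction_on generalizing T with
  | empty => simpa using hfalse T (by simpa using hk)
  | insert a U haU ih =>
    have haT : a ∉ T := disjoint_left.1 hUT (mem_insert_self a U)
    have hUT' : Disjoint U T := disjoint_of_subset_left (subset_insert a U) hUT
    have hUaT : Disjoint U (insert a T) := disjoint_insert_right.2 ⟨haU, hUT'⟩
    rw [card_insert_of_notMem haU] at hk ⊢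
    -- `a` true = (no constraint at `a`) minus (`a` false), both covered by `ih`
    have hsplit := pr_eq_pr_and_add_pr_and_not Q
      (fun x => (∀ i ∈ U, x i = true) ∧ ∀ i ∈ T, x i = false) (fun x => x a = true)
    rw [ih hUT' (by omega)] at hsplit
    have hfa : pr Q (fun x => ((∀ i ∈ U, x i = true) ∧ ∀ i ∈ T, x i = false) ∧ ¬x a = true)
        = p ^ #U * (1 - p) ^ (#T + 1) := by
      rw [← card_insert_of_notMem haT, ← ih hUaT (by rw [card_insert_of_notMem haT]; omega)]
      simp only [forall_mem_insert, Bool.not_eq_true]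
      congr 1; ext x; tauto
    have htr : pr Q (fun x => ((∀ i ∈ U, x i = true) ∧ ∀ i ∈ T, x i = false) ∧ x a = true)
        = pr Q (fun x => (∀ i ∈ insert a U, x i = true) ∧ ∀ i ∈ T, x i = false) := by
      simp only [forall_mem_insert]
      congr 1; ext x; tauto
    rw [hfa, htr] at hsplit
    linear_combination -hsplit

theorem kwise_of_pr_forall_false {k : ℕ} {p : ℝ} {Q : (ι → Bool) → ℝ} (hQ : ∀ x, 0 ≤ Q x)
    (hfalse : ∀ T : Finset ι, #T ≤ k → pr Q (fun x => ∀ i ∈ T, x i = false) = (1 - p) ^ #T) :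
    kwise k p Q := by
  refine ⟨hQ, by simpa [pr] using hfalse ∅ (by simp), fun S hS b => ?_⟩
  have hdisj : Disjoint {i ∈ S | b i = true} {i ∈ S | ¬b i = true} :=
    disjoint_filter_filter_not _ _ _
  have hcard : #{i ∈ S | b i = true} + #{i ∈ S | ¬b i = true} = #S :=
    card_filter_add_card_filter_not _
  rw [prod_ite, prod_const, prod_const, ← pr_forall_true_and_forall_false hfalse hdisj (by omega),
    pr_eq_sum_filter]
  refine sum_congr (filter_congr fun x _ => ?_) fun _ _ => rfl
  simp only [mem_filter, Bool.not_eq_true]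
  refine ⟨fun h => ⟨fun i hi => (h i hi.1).trans hi.2, fun i hi => (h i hi.1).trans hi.2⟩,
    fun h i hi => ?_⟩
  cases hb : b i
  · exact h.2 i ⟨hi, hb⟩
  · exact h.1 i ⟨hi, hb⟩

lemma sum_powersetCard_pr_forall_false (Q : (ι → Bool) → ℝ) (t : ℕ) :
    ∑ T ∈ powersetCard t univ, pr Q (fun x => ∀ i ∈ T, x i = false)
      = ∑ x, Q x * (numFalse x).choose t := by
  simp only [pr_eq_sum_filter, sum_filter]
  rw [sum_comm]
  refine sum_congr rfl fun x _ => ?_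
  have hsets : {T ∈ powersetCard t (univ : Finset ι) | ∀ i ∈ T, x i = false}
      = powersetCard t ({i | x i = false} : Finset ι) := by
    ext T
    simp only [mem_filter, mem_powersetCard, true_and, subset_iff, mem_univ]
    tauto
  rw [← sum_filter, hsets, sum_const, card_powersetCard, nsmul_eq_mul, mul_comm, numFalse]

lemma kwise.pr_forall_false {k : ℕ} {p : ℝ} {Q : (ι → Bool) → ℝ} (hQ : kwise k p Q)
    {T : Finset ι} (hT : #T ≤ k) :
    pr Q (fun x => ∀ i ∈ T, x i = false) = (1 - p) ^ #T := by
  rw [pr_eq_sum_filter, hQ.2.2 T hT (fun _ => false)]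
  simp

lemma kwise.sum_mul_choose_numFalse {k : ℕ} {p : ℝ} {Q : (ι → Bool) → ℝ} (hQ : kwise k p Q)
    {t : ℕ} (ht : t ≤ k) :
    ∑ x, Q x * (numFalse x).choose t = (Fintype.card ι).choose t * (1 - p) ^ t := by
  rw [← sum_powersetCard_pr_forall_false, sum_congr rfl fun T hT => hQ.pr_forall_false
    ((mem_powersetCard.1 hT).2.trans_le ht), sum_congr rfl fun T hT => by
    rw [(mem_powersetCard.1 hT).2]]
  simp [card_powersetCard]

/-- The mixture, with weights `w j`, of the uniform distributions on the vectors with `j` zeros. -/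
noncomputable def symmetricDist (w : ℕ → ℝ) (x : ι → Bool) : ℝ :=
  w (numFalse x) / #{y : ι → Bool | numFalse y = numFalse x}

lemma symmetricDist_nonneg {w : ℕ → ℝ} (hw : ∀ j, 0 ≤ w j) (x : ι → Bool) :
    0 ≤ symmetricDist w x :=
  div_nonneg (hw _) (Nat.cast_nonneg _)

lemma symmetricDist_comp_perm (w : ℕ → ℝ) (σ : Equiv.Perm ι) (x : ι → Bool) :
    symmetricDist w (x ∘ σ) = symmetricDist w x := by
  simp only [symmetricDist, numFalse_comp_perm]

lemma symmetricDist_allTrue (w : ℕ → ℝ) : symmetricDist w (fun _ : ι => true) = w 0 := by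
  have hzero : numFalse (fun _ : ι => true) = 0 := numFalse_eq_zero_iff.2 rfl
  simp [symmetricDist, hzero, numFalse_eq_zero_iff, filter_eq']

lemma sum_symmetricDist_mul (w : ℕ → ℝ) (F : ℕ → ℝ) :
    ∑ x : ι → Bool, symmetricDist w x * F (numFalse x)
      = ∑ j ∈ range (Fintype.card ι + 1), w j * F j := by
  rw [← sum_fiberwise_of_maps_to (g := numFalse) (t := range (Fintype.card ι + 1))
    fun x _ => mem_range.2 (Nat.lt_succ_of_le (numFalse_le x))]
  refine sum_congr rfl fun j hj => ?_
  obtain ⟨x, hx⟩ := exists_numFalse_eq (Nat.le_of_lt_succ (mem_range.1 hj))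
  have hfiber : (#{y : ι → Bool | numFalse y = j} : ℝ) ≠ 0 := by
    exact_mod_cast (card_pos.2 ⟨x, by simp [hx]⟩).ne'
  rw [sum_congr rfl fun y hy => by rw [symmetricDist, (mem_filter.1 hy).2], sum_const,
    nsmul_eq_mul]
  field_simp

lemma pr_forall_false_eq_of_card_eq {Q : (ι → Bool) → ℝ}
    (hQ : ∀ (σ : Equiv.Perm ι) x, Q (x ∘ σ) = Q x) {T T' : Finset ι} (h : #T = #T') :
    pr Q (fun x => ∀ i ∈ T, x i = false) = pr Q (fun x => ∀ i ∈ T', x i = false) := by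
  obtain ⟨σ, hσ⟩ := (Set.powersetCard.isPretransitive (α := ι) (n := #T')).exists_smul_eq
    ⟨T, Set.powersetCard.mem_iff.2 h⟩ ⟨T', Set.powersetCard.mem_iff.2 rfl⟩
  have hT' : T' = T.image σ := by
    simpa [smul_finset_def] using (congrArg Subtype.val hσ).symm
  subst hT'
  rw [pr, pr, ← (Equiv.arrowCongr σ.symm (Equiv.refl Bool)).sum_comp]
  refine sum_congr rfl fun x _ => ?_
  rw [show Equiv.arrowCongr σ.symm (Equiv.refl Bool) x = x ∘ σ from rfl, hQ]
  simp

lemma choose_mul_pr_forall_false_of_perm_invariant {Q : (ι → Bool) → ℝ}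
    (hQ : ∀ (σ : Equiv.Perm ι) x, Q (x ∘ σ) = Q x) (T : Finset ι) :
    (Fintype.card ι).choose #T * pr Q (fun x => ∀ i ∈ T, x i = false)
      = ∑ x, Q x * (numFalse x).choose #T := by
  rw [← sum_powersetCard_pr_forall_false, sum_congr rfl fun T' hT' =>
    pr_forall_false_eq_of_card_eq hQ (mem_powersetCard.1 hT').2, sum_const, card_powersetCard,
    card_univ, nsmul_eq_mul]

theorem kwise_symmetricDist {k : ℕ} {p : ℝ} {w : ℕ → ℝ} (hw : ∀ j, 0 ≤ w j)
    (hmoment : ∀ t ≤ k, ∑ j ∈ range (Fintype.card ι + 1), w j * j.choose t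
      = (Fintype.card ι).choose t * (1 - p) ^ t) :
    kwise k p (symmetricDist (ι := ι) w) := by
  refine kwise_of_pr_forall_false (symmetricDist_nonneg hw) fun T hT => ?_
  have hchoose : ((Fintype.card ι).choose #T : ℝ) ≠ 0 :=
    Nat.cast_ne_zero.2 (Nat.choose_pos (card_le_univ T)).ne'
  have h := choose_mul_pr_forall_false_of_perm_invariant (symmetricDist_comp_perm w) T
  have hsum := sum_symmetricDist_mul (ι := ι) w fun j => (j.choose #T : ℝ)
  rw [hsum, hmoment _ hT] at h
  exact mul_left_cancel₀ hchoose h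

lemma kwise.sum_mul_quadratic_numFalse {p : ℝ} {Q : (ι → Bool) → ℝ} (hQ : kwise 2 p Q) (r : ℝ) :
    ∑ x, Q x * ((numFalse x - (r + 1)) * (numFalse x - (r + 2)))
      = Fintype.card ι * (Fintype.card ι - 1) * (1 - p) ^ 2
        - 2 * (r + 1) * (Fintype.card ι * (1 - p)) + (r + 1) * (r + 2) := by
  have h0 := hQ.sum_mul_choose_numFalse (t := 0) (by norm_num)
  have h1 := hQ.sum_mul_choose_numFalse (t := 1) (by norm_num)
  have h2 := hQ.sum_mul_choose_numFalse (t := 2) le_rfl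
  simp only [Nat.choose_zero_right, Nat.choose_one_right, Nat.cast_choose_two, Nat.cast_one,
    mul_one, pow_zero, pow_one] at h0 h1 h2
  have hsplit : ∀ x, Q x * ((numFalse x - (r + 1)) * (numFalse x - (r + 2)))
      = 2 * (Q x * (numFalse x * (numFalse x - 1) / 2)) - 2 * (r + 1) * (Q x * numFalse x)
        + (r + 1) * (r + 2) * Q x := fun x => by ring
  rw [sum_congr rfl fun x _ => hsplit x, sum_add_distrib, sum_sub_distrib, ← mul_sum, ← mul_sum,
    ← mul_sum, h0, h1, h2]
  ring

lemma natCast_sub_add_one_mul_sub_add_two_nonneg (z m : ℕ) :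
    0 ≤ ((z : ℝ) - (m + 1)) * (z - (m + 2)) := by
  rcases le_or_gt z (m + 1) with h | h
  · have h' : (z : ℝ) ≤ m + 1 := by exact_mod_cast h
    nlinarith
  · have h' : (m : ℝ) + 2 ≤ z := by exact_mod_cast h
    nlinarith

theorem kwise.pr_forall_true_mul_le {p : ℝ} {Q : (ι → Bool) → ℝ} (hQ : kwise 2 p Q) (m : ℕ) :
    pr Q (fun x => ∀ i, x i = true) * ((m + 1) * (m + 2))
      ≤ Fintype.card ι * (Fintype.card ι - 1) * (1 - p) ^ 2
        - 2 * (m + 1) * (Fintype.card ι * (1 - p)) + (m + 1) * (m + 2) := by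
  rw [pr_forall_true, ← hQ.sum_mul_quadratic_numFalse]
  have hzero : numFalse (fun _ : ι => true) = 0 := numFalse_eq_zero_iff.2 rfl
  calc Q (fun _ => true) * ((m + 1) * (m + 2))
      = Q (fun _ => true) * ((numFalse (fun _ : ι => true) - ((m : ℝ) + 1))
          * (numFalse (fun _ : ι => true) - ((m : ℝ) + 2))) := by
        rw [hzero]; ring
    _ ≤ _ := single_le_sum
        (fun x _ => mul_nonneg (hQ.1 x) (natCast_sub_add_one_mul_sub_add_two_nonneg _ _))
        (mem_univ _)

def threePointWeights (m : ℕ) (a b c : ℝ) (j : ℕ) : ℝ :=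
  (if j = 0 then a else 0) + (if j = m + 1 then b else 0) + (if j = m + 2 then c else 0)

lemma sum_range_mul_threePointWeights {n m : ℕ} (hm : m + 2 ≤ n) (a b c : ℝ) (F : ℕ → ℝ) :
    ∑ j ∈ range (n + 1), threePointWeights m a b c j * F j
      = a * F 0 + b * F (m + 1) + c * F (m + 2) := by
  simp only [threePointWeights, add_mul, ite_mul, zero_mul, sum_add_distrib, sum_ite_eq',
    mem_range]
  rw [if_pos (by omega), if_pos (by omega), if_pos (by omega)]

lemma two_point_weights_le_one {q s : ℝ} {m : ℕ} (hq1 : q ≤ 1) (hsm : s ≤ m + 1)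
    (hqs : q * (m + 1) ≤ s) :
    (s + q) * (m + 1 - s) / (m + 1) + (s + q) * (s - m) / (m + 2) ≤ 1 := by
  have hqr : q * (m + 1 - s) ≤ m + 1 - s := mul_le_of_le_one_left (by linarith) hq1
  rw [div_add_div _ _ (by positivity) (by positivity), div_le_one (by positivity)]
  nlinarith [sq_nonneg ((m : ℝ) + 1 - s)]

theorem exists_kwise_two_pr_forall_true_mul_eq {p : ℝ} (hp0 : 0 ≤ p) (hp1 : p ≤ 1) {m : ℕ}
    (hmn : m + 2 ≤ Fintype.card ι) (hm : (m : ℝ) ≤ (Fintype.card ι - 1) * (1 - p))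
    (hm' : (Fintype.card ι - 1) * (1 - p) ≤ m + 1) :
    ∃ Q : (ι → Bool) → ℝ, kwise 2 p Q ∧
      pr Q (fun x => ∀ i, x i = true) * ((m + 1) * (m + 2))
        = Fintype.card ι * (Fintype.card ι - 1) * (1 - p) ^ 2
          - 2 * (m + 1) * (Fintype.card ι * (1 - p)) + (m + 1) * (m + 2) := by
  set n : ℝ := (Fintype.card ι : ℝ)
  set s : ℝ := (n - 1) * (1 - p)
  -- the weights on `m + 1` and `m + 2` that match `E[Z] = n(1-p)` and `E[Z(Z-1)] = n(n-1)(1-p)²`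
  set b : ℝ := n * (1 - p) * (m + 1 - s) / (m + 1)
  set c : ℝ := n * (1 - p) * (s - m) / (m + 2)
  have hq0 : 0 ≤ 1 - p := by linarith
  have hn : (m : ℝ) + 2 ≤ n := by simp only [n]; exact_mod_cast hmn
  have hmean : n * (1 - p) = s + (1 - p) := by ring
  have hb : 0 ≤ b := div_nonneg (mul_nonneg (by positivity) (by linarith)) (by positivity)
  have hc : 0 ≤ c := div_nonneg (mul_nonneg (by positivity) (by linarith)) (by positivity)
  have ha : 0 ≤ 1 - b - c := by
    have hqs : (1 - p) * (m + 1) ≤ s := by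
      simp only [s, mul_comm (n - 1)]
      exact mul_le_mul_of_nonneg_left (by linarith) hq0
    have hbc := two_point_weights_le_one (by linarith) hm' hqs
    rw [← hmean] at hbc
    linarith
  have hw : ∀ j, 0 ≤ threePointWeights m (1 - b - c) b c j := fun j => by
    unfold threePointWeights; split_ifs <;> linarith
  have hQ : kwise 2 p (symmetricDist (ι := ι) (threePointWeights m (1 - b - c) b c)) :=
    kwise_symmetricDist hw fun t ht => by
      rw [sum_range_mul_threePointWeights hmn]
      interval_cases t <;> simp [Nat.cast_choose_two, b, c] <;> field_simp <;> ring
  refine ⟨_, hQ, ?_⟩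
  rw [← hQ.sum_mul_quadratic_numFalse,
    sum_symmetricDist_mul _ fun j : ℕ => ((j : ℝ) - (m + 1)) * (j - (m + 2)),
    sum_range_mul_threePointWeights hmn,
    pr_forall_true, symmetricDist_allTrue]
  simp only [threePointWeights, if_true, (Nat.succ_ne_zero _).symm, if_false]
  push_cast
  ring

end

/-- Exact value of the maximal probability of the all-ones vector under pairwise
independent distributions: with `M = ⌊(n-1)(1-p)⌋` and `δ = {(n-1)(1-p)}`,
`M(n,2,p) = p/(M+2) + (δ² - δ(1+p) + p)/((M+1)(M+2))`. -/
theorem all_ones_exact_k2 (n : ℕ) (hn : 2 < n) (p : ℝ) (hp0 : 0 < p) (hp1 : p < 1) :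
    IsGreatest {v : ℝ | ∃ Q : (Fin n → Bool) → ℝ, kwise 2 p Q ∧
        v = pr Q (fun x => ∀ i, x i = true)}
      (p / ((⌊((n : ℝ) - 1) * (1 - p)⌋ : ℝ) + 2) +
        (Int.fract (((n : ℝ) - 1) * (1 - p)) ^ 2
            - Int.fract (((n : ℝ) - 1) * (1 - p)) * (1 + p) + p) /
          (((⌊((n : ℝ) - 1) * (1 - p)⌋ : ℝ) + 1) * ((⌊((n : ℝ) - 1) * (1 - p)⌋ : ℝ) + 2))) := by
  set s : ℝ := ((n : ℝ) - 1) * (1 - p)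
  have hn' : (3 : ℝ) ≤ n := by exact_mod_cast hn
  have hs0 : 0 ≤ s := mul_nonneg (by linarith) (by linarith)
  set m : ℕ := ⌊s⌋₊
  have hfloor : (⌊s⌋ : ℝ) = m := by rw [← Int.natCast_floor_eq_floor hs0, Int.cast_natCast]
  have hm : (m : ℝ) ≤ s := Nat.floor_le hs0
  have hm' : s < m + 1 := Nat.lt_floor_add_one s
  have hmn : m + 2 ≤ n := by
    have : (m : ℝ) + 1 < n := by nlinarith
    exact_mod_cast this
  have hpos : (0 : ℝ) < (m + 1) * (m + 2) := by positivity
  have hvalue : (p / (m + 2) + ((s - m) ^ 2 - (s - m) * (1 + p) + p) / ((m + 1) * (m + 2)))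
      * ((m + 1) * (m + 2)) = n * (n - 1) * (1 - p) ^ 2 - 2 * (m + 1) * (n * (1 - p))
        + (m + 1) * (m + 2) := by
    field_simp
    ring
  rw [hfloor, Int.fract, hfloor]
  refine ⟨?_, ?_⟩
  · obtain ⟨Q, hQ, hQv⟩ := exists_kwise_two_pr_forall_true_mul_eq (ι := Fin n) hp0.le hp1.le
      (m := m) (by simpa using hmn) (by simpa using hm) (by simpa using hm'.le)
    simp only [Fintype.card_fin] at hQv
    exact ⟨Q, hQ, mul_right_cancel₀ hpos.ne' (hvalue.trans hQv.symm)⟩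
  · rintro v ⟨Q, hQ, rfl⟩
    have hle := hQ.pr_forall_true_mul_le m
    simp only [Fintype.card_fin] at hle
    exact le_of_mul_le_mul_right (hle.trans hvalue.ge) hpos
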